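/- Let G_n(α,β,W) be the heterogeneous Erdős–Rényi random graph, Ā_{ij} = A_{ij} − p_n w_{ij}, μ_{ij} = p_n w_{ij}, and ν_i = Σ_{j,k} μ_{ij} μ_{jk}. Then E[((1/n) Σ_{i≠j≠k≠t} A_{ij}A_{jk}A_{ki} μ_{ij} Ā_{jt} / ν_i²)²] = O(1/(n²(np_n)²)), where the sum is over quadruples of pairwise distinct indices i,j,k,t ∈ [n]. -/

import Mathlib

open MeasureTheory ProbabilityTheory Finset Filter

noncomputable section

/-- Edge probability `p_n = n^{-α}`. -/
def pn (α : ℝ) (n : ℕ) : ℝ := (n : ℝ) ^ (-α)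

/-- Edge mean `μ_{ij} = p_n w_{ij}` in the graph on `n` vertices. -/
def edgeP (α : ℝ) (w : ℕ → ℕ → ℕ → ℝ) (n i j : ℕ) : ℝ := pn α n * w n i j

/-- `ν_i = Σ_{j,k} p_n² w_{ij} w_{jk}`. -/
def nu (α : ℝ) (w : ℕ → ℕ → ℕ → ℝ) (n i : ℕ) : ℝ :=
  ∑ j ∈ Finset.range n, ∑ k ∈ Finset.range n, edgeP α w n i j * edgeP α w n j k

/-- Centered edge indicator `Ā_{ij} = A_{ij} - p_n w_{ij}`. -/
def Abar {Ω : ℕ → Type} (α : ℝ) (w : ℕ → ℕ → ℕ → ℝ) (A : ∀ n, ℕ → ℕ → Ω n → ℝ)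
    (n i j : ℕ) (ω : Ω n) : ℝ := A n i j ω - edgeP α w n i j

/-- The average closure coefficient `𝓗̄_n`; summands with a vanishing denominator are `0`
(real division by zero is zero). -/
def closureAvg {Ω : ℕ → Type} (A : ∀ n, ℕ → ℕ → Ω n → ℝ) (n : ℕ) (ω : Ω n) : ℝ :=
  ((n : ℝ))⁻¹ * ∑ i ∈ Finset.range n,
    (∑ j ∈ (Finset.range n).erase i, ∑ k ∈ ((Finset.range n).erase i).erase j,
        A n i j ω * A n j k ω * A n k i ω) /
    (∑ j ∈ (Finset.range n).erase i, ∑ k ∈ ((Finset.range n).erase i).erase j,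
        A n i j ω * A n j k ω)

/-- The hypotheses of the heterogeneous Erdős–Rényi random graph `G_n(α, β, W)`:
symmetric weights `w_{ij} ∈ [β,1]` (vanishing on the diagonal), and independent Bernoulli
edge indicators `A_{ij} = A_{ji} ∈ {0,1}` with `P(A_{ij} = 1) = p_n w_{ij}`. -/
structure IsHeterER (α β : ℝ) {Ω : ℕ → Type} [∀ n, MeasurableSpace (Ω n)]
    (μ : ∀ n, Measure (Ω n)) (w : ℕ → ℕ → ℕ → ℝ) (A : ∀ n, ℕ → ℕ → Ω n → ℝ) : Prop where
  alpha_mem : α ∈ Set.Ioo (0 : ℝ) 1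
  beta_mem : β ∈ Set.Ioo (0 : ℝ) 1
  prob : ∀ n, IsProbabilityMeasure (μ n)
  w_symm : ∀ n i j, w n i j = w n j i
  w_diag : ∀ n i, w n i i = 0
  w_mem : ∀ n, ∀ i ∈ Finset.range n, ∀ j ∈ Finset.range n, i ≠ j → w n i j ∈ Set.Icc β 1
  A_symm : ∀ n i j ω, A n i j ω = A n j i ω
  A_diag : ∀ n i ω, A n i i ω = 0
  A_meas : ∀ n i j, Measurable (A n i j)
  A_vals : ∀ n i j ω, A n i j ω = 0 ∨ A n i j ω = 1
  A_prob : ∀ n, ∀ i ∈ Finset.range n, ∀ j ∈ Finset.range n, i ≠ j →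
      μ n {ω | A n i j ω = 1} = ENNReal.ofReal (edgeP α w n i j)
  A_indep : ∀ n, iIndepFun
      (fun (e : {q : ℕ × ℕ // q.1 < q.2}) ω => A n e.1.1 e.1.2 ω) (μ n)

/-- `b_{ij} = Σ_k μ_{ik} μ_{jk} / ν_k`. -/
def bcoef (α : ℝ) (w : ℕ → ℕ → ℕ → ℝ) (n i j : ℕ) : ℝ :=
  ∑ k ∈ Finset.range n, edgeP α w n i k * edgeP α w n j k / nu α w n k

/-- `c_{ij} = Σ_k μ_{ik} μ_{jk} / ν_i`. -/
def ccoef (α : ℝ) (w : ℕ → ℕ → ℕ → ℝ) (n i j : ℕ) : ℝ :=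
  ∑ k ∈ Finset.range n, edgeP α w n i k * edgeP α w n j k / nu α w n i

/-- `a_s = Σ_{i,j,k} μ_{ij} μ_{jk} μ_{ki} μ_{is} / ν_i²`. -/
def acoef (α : ℝ) (w : ℕ → ℕ → ℕ → ℝ) (n s : ℕ) : ℝ :=
  ∑ i ∈ Finset.range n, ∑ j ∈ Finset.range n, ∑ k ∈ Finset.range n,
    edgeP α w n i j * edgeP α w n j k * edgeP α w n k i * edgeP α w n i s / (nu α w n i) ^ 2

/-- `e_{is} = Σ_{j,k,t} μ_{ij} μ_{jk} μ_{ki} μ_{st} / ν_i²`. -/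
def ecoef (α : ℝ) (w : ℕ → ℕ → ℕ → ℝ) (n i s : ℕ) : ℝ :=
  ∑ j ∈ Finset.range n, ∑ k ∈ Finset.range n, ∑ t ∈ Finset.range n,
    edgeP α w n i j * edgeP α w n j k * edgeP α w n k i * edgeP α w n s t / (nu α w n i) ^ 2

/-- `σ_{1n}²`. -/
def sigma1sq (α : ℝ) (w : ℕ → ℕ → ℕ → ℝ) (n : ℕ) : ℝ :=
  4 / (n : ℝ) ^ 2 * ∑ i ∈ Finset.range n, ∑ j ∈ Finset.Ioo i n, ∑ k ∈ Finset.Ioo j n,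
    ((nu α w n i)⁻¹ + (nu α w n j)⁻¹ + (nu α w n k)⁻¹) ^ 2 *
      (edgeP α w n i j * (1 - edgeP α w n i j)) *
      (edgeP α w n j k * (1 - edgeP α w n j k)) *
      (edgeP α w n k i * (1 - edgeP α w n k i))

/-- `σ_{2n}²`. -/
def sigma2sq (α : ℝ) (w : ℕ → ℕ → ℕ → ℝ) (n : ℕ) : ℝ :=
  1 / (n : ℝ) ^ 2 * ∑ i ∈ Finset.range n, ∑ j ∈ Finset.Ioo i n,
    (2 * bcoef α w n i j + 2 * ccoef α w n i j + 2 * ccoef α w n j i -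
        (acoef α w n i + acoef α w n j) - (ecoef α w n i j + ecoef α w n j i)) ^ 2 *
      (edgeP α w n i j * (1 - edgeP α w n i j))

/-- `σ_n² = σ_{1n}² + σ_{2n}²`. -/
def sigmasq (α : ℝ) (w : ℕ → ℕ → ℕ → ℝ) (n : ℕ) : ℝ :=
  sigma1sq α w n + sigma2sq α w n

/-- Convergence in distribution to the standard normal law `N(0,1)`:
the integrals of every bounded continuous function converge. -/
def TendstoGaussian {Ω : ℕ → Type} [∀ n, MeasurableSpace (Ω n)]
    (μ : ∀ n, Measure (Ω n)) (X : ∀ n, Ω n → ℝ) : Prop :=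
  ∀ f : BoundedContinuousFunction ℝ ℝ,
    Tendsto (fun n => ∫ ω, f (X n ω) ∂μ n) atTop (nhds (∫ x, f x ∂gaussianReal 0 1))

/-- The constant weights of the homogeneous Erdős–Rényi graph `G_n(α)`. -/
def erW : ℕ → ℕ → ℕ → ℝ := fun _ i j => if i = j then 0 else 1

/-- `δ_n = (log (n p_n))^{-2}`. -/
def deltaN (α : ℝ) (n : ℕ) : ℝ := ((Real.log ((n : ℝ) * pn α n)) ^ 2)⁻¹

/-- `ε_n = (log (n p_n))^{-5}`. -/
def epsN (α : ℝ) (n : ℕ) : ℝ := ((Real.log ((n : ℝ) * pn α n)) ^ 5)⁻¹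

/-- `c_n = (log (n p_n))^{-1/2}`. -/
def cN (α : ℝ) (n : ℕ) : ℝ := (Real.sqrt (Real.log ((n : ℝ) * pn α n)))⁻¹

/-- The number of 2-paths emanating from `i`: `V_i = Σ_{j,k ∉ {i}} A_{ij} A_{jk}`. -/
def twoPaths {Ω : ℕ → Type} (A : ∀ n, ℕ → ℕ → Ω n → ℝ) (n i : ℕ) (ω : Ω n) : ℝ :=
  ∑ j ∈ (Finset.range n).erase i, ∑ k ∈ (Finset.range n).erase i, A n i j ω * A n j k ω

/-- `Δ_i = Σ_{j ≠ k, j,k ≠ i} A_{ij} A_{jk} A_{ki}`, twice the number of triangles at `i`. -/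
def triCount {Ω : ℕ → Type} (A : ∀ n, ℕ → ℕ → Ω n → ℝ) (n i : ℕ) (ω : Ω n) : ℝ :=
  ∑ j ∈ (Finset.range n).erase i, ∑ k ∈ ((Finset.range n).erase i).erase j,
    A n i j ω * A n j k ω * A n k i ω

/-- Degree of vertex `i`: `d_i = Σ_j A_{ij}`. -/
def degree {Ω : ℕ → Type} (A : ∀ n, ℕ → ℕ → Ω n → ℝ) (n i : ℕ) (ω : Ω n) : ℝ :=
  ∑ j ∈ Finset.range n, A n i j ω

/-- The statistic `(1/n) Σ_{i≠j≠k≠t} A_{ij}A_{jk}A_{ki} μ_{ij} Ā_{jt} / ν_i²`. -/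
def stat16 {Ω : ℕ → Type} (α : ℝ) (w : ℕ → ℕ → ℕ → ℝ) (A : ∀ n, ℕ → ℕ → Ω n → ℝ)
    (n : ℕ) (ω : Ω n) : ℝ :=
  ((n : ℝ))⁻¹ * ∑ i ∈ Finset.range n, ∑ j ∈ (Finset.range n).erase i,
    ∑ k ∈ ((Finset.range n).erase i).erase j,
      ∑ t ∈ (((Finset.range n).erase i).erase j).erase k,
        A n i j ω * A n j k ω * A n k i ω * edgeP α w n i j * Abar α w A n j t ω /
          (nu α w n i) ^ 2

section Stat16Aux

/-- normalized (sorted) edge -/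
def sedge (a b : ℕ) : ℕ × ℕ := if a < b then (a, b) else (b, a)

lemma sedge_cases (a b : ℕ) : sedge a b = (a, b) ∨ sedge a b = (b, a) := by
  unfold sedge; split <;> simp

lemma sedge_eq_elim {a b c d : ℕ} (h : sedge a b = sedge c d) :
    (a = c ∧ b = d) ∨ (a = d ∧ b = c) := by
  rcases sedge_cases a b with h1 | h1 <;> rcases sedge_cases c d with h2 | h2 <;>
    rw [h1, h2] at h <;> simp_all [Prod.ext_iff] <;> omega

lemma sedge_facts {a b n : ℕ} (hab : a ≠ b) (ha : a < n) (hb : b < n) :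
    (sedge a b).1 < (sedge a b).2 ∧ (sedge a b).1 < n ∧ (sedge a b).2 < n := by
  unfold sedge; split <;> simp <;> omega

lemma sedge_right_inj {a b c : ℕ} (h : sedge a b = sedge a c) (hb : b ≠ a) : b = c := by
  rcases sedge_eq_elim h with ⟨h1, h2⟩ | ⟨h1, h2⟩ <;> omega

/-- the triangle edges of a quadruple -/
def triq (q : (ℕ × ℕ) × (ℕ × ℕ)) : Finset (ℕ × ℕ) :=
  {sedge q.1.1 q.1.2, sedge q.1.2 q.2.1, sedge q.2.1 q.1.1}

/-- the centered edge of a quadruple -/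
def abq (q : (ℕ × ℕ) × (ℕ × ℕ)) : ℕ × ℕ := sedge q.1.2 q.2.2

def esetq (q : (ℕ × ℕ) × (ℕ × ℕ)) : Finset (ℕ × ℕ) := insert (abq q) (triq q)

/-- pairwise distinctness of a quadruple -/
def goodq (q : (ℕ × ℕ) × (ℕ × ℕ)) : Prop :=
  q.1.2 ≠ q.1.1 ∧ (q.2.1 ≠ q.1.2 ∧ q.2.1 ≠ q.1.1) ∧
    (q.2.2 ≠ q.2.1 ∧ q.2.2 ≠ q.1.2 ∧ q.2.2 ≠ q.1.1)

instance : DecidablePred goodq := fun q => by unfold goodq; infer_instance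

def Qn (n : ℕ) : Finset ((ℕ × ℕ) × (ℕ × ℕ)) :=
  ((Finset.range n ×ˢ Finset.range n) ×ˢ (Finset.range n ×ˢ Finset.range n)).filter goodq

lemma mem_Qn {n : ℕ} {q : (ℕ × ℕ) × (ℕ × ℕ)} (h : q ∈ Qn n) :
    (q.1.1 < n ∧ q.1.2 < n ∧ q.2.1 < n ∧ q.2.2 < n) ∧ goodq q := by
  simp only [Qn, Finset.mem_filter, Finset.mem_product, Finset.mem_range] at h
  tauto

lemma abq_not_mem_triq {q : (ℕ × ℕ) × (ℕ × ℕ)} (h : goodq q) : abq q ∉ triq q := by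
  obtain ⟨h1, ⟨h2, h3⟩, h4, h5, h6⟩ := h
  simp only [triq, abq, Finset.mem_insert, Finset.mem_singleton]
  rintro (he | he | he) <;> rcases sedge_eq_elim he with ⟨e1, e2⟩ | ⟨e1, e2⟩ <;> omega

lemma triq_card {q : (ℕ × ℕ) × (ℕ × ℕ)} (h : goodq q) : (triq q).card = 3 := by
  obtain ⟨h1, ⟨h2, h3⟩, h4, h5, h6⟩ := h
  have d12 : sedge q.1.1 q.1.2 ≠ sedge q.1.2 q.2.1 := by
    intro he; rcases sedge_eq_elim he with ⟨e1, e2⟩ | ⟨e1, e2⟩ <;> omega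
  have d13 : sedge q.1.1 q.1.2 ≠ sedge q.2.1 q.1.1 := by
    intro he; rcases sedge_eq_elim he with ⟨e1, e2⟩ | ⟨e1, e2⟩ <;> omega
  have d23 : sedge q.1.2 q.2.1 ≠ sedge q.2.1 q.1.1 := by
    intro he; rcases sedge_eq_elim he with ⟨e1, e2⟩ | ⟨e1, e2⟩ <;> omega
  simp [triq, d12, d13, d23]

lemma esetq_card {q : (ℕ × ℕ) × (ℕ × ℕ)} (h : goodq q) : (esetq q).card = 4 := by
  rw [esetq, Finset.card_insert_of_notMem (abq_not_mem_triq h), triq_card h]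

lemma mem_esetq_facts {n : ℕ} {q : (ℕ × ℕ) × (ℕ × ℕ)} (hq : q ∈ Qn n) {e : ℕ × ℕ}
    (he : e ∈ esetq q) : e.1 < e.2 ∧ e.1 < n ∧ e.2 < n := by
  obtain ⟨⟨r1, r2, r3, r4⟩, g1, ⟨g2, g3⟩, g4, g5, g6⟩ := mem_Qn hq
  simp only [esetq, triq, abq, Finset.mem_insert, Finset.mem_singleton] at he
  rcases he with rfl | rfl | rfl | rfl
  · exact sedge_facts (by omega) r2 r4
  · exact sedge_facts (by omega) r1 r2
  · exact sedge_facts (by omega) r2 r3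
  · exact sedge_facts (by omega) r3 r1

end Stat16Aux
section Stat16Model

variable {Ω : ℕ → Type} [∀ n, MeasurableSpace (Ω n)] {α β : ℝ}
  {μ : ∀ n, Measure (Ω n)} {w : ℕ → ℕ → ℕ → ℝ} {A : ∀ n, ℕ → ℕ → Ω n → ℝ}

lemma pn_pos {n : ℕ} (hn : 1 ≤ n) : 0 < pn α n := by
  unfold pn
  exact Real.rpow_pos_of_pos (by exact_mod_cast hn) _

lemma pn_le_one (hm : IsHeterER α β μ w A) {n : ℕ} (hn : 1 ≤ n) : pn α n ≤ 1 := by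
  unfold pn
  apply Real.rpow_le_one_of_one_le_of_nonpos (by exact_mod_cast hn)
  linarith [hm.alpha_mem.1]

lemma npn_ge_one (hm : IsHeterER α β μ w A) {n : ℕ} (hn : 1 ≤ n) : 1 ≤ (n : ℝ) * pn α n := by
  have h1 : (1:ℝ) ≤ (n:ℝ) := by exact_mod_cast hn
  have hpos : (0:ℝ) < (n:ℝ) := by linarith
  have heq : (n : ℝ) * pn α n = (n : ℝ) ^ ((1:ℝ) + (-α)) := by
    unfold pn
    rw [Real.rpow_add hpos, Real.rpow_one]
  rw [heq]
  calc (1:ℝ) = (n:ℝ) ^ (0:ℝ) := by rw [Real.rpow_zero]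
    _ ≤ (n:ℝ) ^ ((1:ℝ) + (-α)) :=
        Real.rpow_le_rpow_of_exponent_le h1 (by linarith [hm.alpha_mem.2])

lemma w_nonneg (hm : IsHeterER α β μ w A) {n a b : ℕ} (ha : a < n) (hb : b < n) :
    0 ≤ w n a b := by
  by_cases hab : a = b
  · subst hab; rw [hm.w_diag]
  · have := hm.w_mem n a (Finset.mem_range.2 ha) b (Finset.mem_range.2 hb) hab
    have hβ := hm.beta_mem.1
    linarith [this.1]

lemma w_le_one (hm : IsHeterER α β μ w A) {n a b : ℕ} (ha : a < n) (hb : b < n) :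
    w n a b ≤ 1 := by
  by_cases hab : a = b
  · subst hab; rw [hm.w_diag]; norm_num
  · exact (hm.w_mem n a (Finset.mem_range.2 ha) b (Finset.mem_range.2 hb) hab).2

lemma edgeP_nonneg (hm : IsHeterER α β μ w A) {n a b : ℕ} (ha : a < n) (hb : b < n) :
    0 ≤ edgeP α w n a b :=
  mul_nonneg (le_of_lt (pn_pos (by omega))) (w_nonneg hm ha hb)

lemma edgeP_le_pn (hm : IsHeterER α β μ w A) {n a b : ℕ} (ha : a < n) (hb : b < n) :
    edgeP α w n a b ≤ pn α n := by
  have := pn_pos (α := α) (n := n) (by omega)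
  calc edgeP α w n a b ≤ pn α n * 1 := by
        unfold edgeP; exact mul_le_mul_of_nonneg_left (w_le_one hm ha hb) (le_of_lt this)
    _ = pn α n := mul_one _

lemma edgeP_le_one (hm : IsHeterER α β μ w A) {n a b : ℕ} (ha : a < n) (hb : b < n) :
    edgeP α w n a b ≤ 1 :=
  le_trans (edgeP_le_pn hm ha hb) (pn_le_one hm (by omega))

lemma edgeP_symm {n a b : ℕ} (hm : IsHeterER α β μ w A) :
    edgeP α w n a b = edgeP α w n b a := by unfold edgeP; rw [hm.w_symm]

lemma edgeP_ge (hm : IsHeterER α β μ w A) {n a b : ℕ} (ha : a < n) (hb : b < n) (hab : a ≠ b) :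
    β * pn α n ≤ edgeP α w n a b := by
  have h1 := (hm.w_mem n a (Finset.mem_range.2 ha) b (Finset.mem_range.2 hb) hab).1
  have h2 := pn_pos (α := α) (n := n) (by omega)
  unfold edgeP
  calc β * pn α n = pn α n * β := mul_comm _ _
    _ ≤ pn α n * w n a b := mul_le_mul_of_nonneg_left h1 (le_of_lt h2)

lemma A_sedge (hm : IsHeterER α β μ w A) {n : ℕ} (a b : ℕ) (ω : Ω n) :
    A n (sedge a b).1 (sedge a b).2 ω = A n a b ω := by
  rcases sedge_cases a b with h | h <;> rw [h] <;> simp [hm.A_symm n]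

lemma edgeP_sedge (hm : IsHeterER α β μ w A) {n : ℕ} (a b : ℕ) :
    edgeP α w n (sedge a b).1 (sedge a b).2 = edgeP α w n a b := by
  rcases sedge_cases a b with h | h <;> rw [h] <;> simp [edgeP_symm hm]

lemma nu_lb (hm : IsHeterER α β μ w A) {n i : ℕ} (hi : i < n) (hn : 2 ≤ n) :
    β ^ 2 * ((n : ℝ) - 1) ^ 2 * (pn α n) ^ 2 ≤ nu α w n i := by
  have hβ := hm.beta_mem.1
  have hp := pn_pos (α := α) (n := n) (by omega)
  have key : ∀ j ∈ Finset.range n, j ≠ i →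
      ((n : ℝ) - 1) * (β * pn α n) * (β * pn α n)
        ≤ ∑ k ∈ Finset.range n, edgeP α w n i j * edgeP α w n j k := by
    intro j hj hji
    have hj' := Finset.mem_range.1 hj
    have step : ∀ k ∈ (Finset.range n).erase j,
        β * pn α n * (β * pn α n) ≤ edgeP α w n i j * edgeP α w n j k := by
      intro k hk
      obtain ⟨hkj, hk'⟩ := Finset.mem_erase.1 hk
      have hk'' := Finset.mem_range.1 hk'
      have e1 := edgeP_ge hm hi hj' (Ne.symm hji)
      have e2 := edgeP_ge hm hj' hk'' (Ne.symm hkj)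
      exact mul_le_mul e1 e2 (mul_nonneg (by linarith) (le_of_lt hp))
        (edgeP_nonneg hm hi hj')
    calc ((n : ℝ) - 1) * (β * pn α n) * (β * pn α n)
        = ((Finset.range n).erase j).card * (β * pn α n * (β * pn α n)) := by
          rw [Finset.card_erase_of_mem (Finset.mem_range.2 hj')]
          rw [Finset.card_range]
          have : ((n - 1 : ℕ) : ℝ) = (n : ℝ) - 1 := by
            have : (1:ℕ) ≤ n := by omega
            push_cast [Nat.cast_sub this]; ring
          rw [this]; ring
      _ = ∑ _k ∈ (Finset.range n).erase j, β * pn α n * (β * pn α n) := by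
          rw [Finset.sum_const, nsmul_eq_mul]
      _ ≤ ∑ k ∈ (Finset.range n).erase j, edgeP α w n i j * edgeP α w n j k :=
          Finset.sum_le_sum step
      _ ≤ ∑ k ∈ Finset.range n, edgeP α w n i j * edgeP α w n j k := by
          apply Finset.sum_le_sum_of_subset_of_nonneg (Finset.erase_subset _ _)
          intro k hk _
          exact mul_nonneg (edgeP_nonneg hm hi hj')
            (edgeP_nonneg hm hj' (Finset.mem_range.1 hk))
  calc β ^ 2 * ((n : ℝ) - 1) ^ 2 * (pn α n) ^ 2
      = ((n:ℝ) - 1) * (((n:ℝ) - 1) * (β * pn α n) * (β * pn α n)) := by ring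
    _ = ((Finset.range n).erase i).card * (((n:ℝ) - 1) * (β * pn α n) * (β * pn α n)) := by
        rw [Finset.card_erase_of_mem (Finset.mem_range.2 hi), Finset.card_range]
        have h1 : (1:ℕ) ≤ n := by omega
        have : ((n - 1 : ℕ) : ℝ) = (n : ℝ) - 1 := by push_cast [Nat.cast_sub h1]; ring
        rw [this]
    _ = ∑ _j ∈ (Finset.range n).erase i, ((n:ℝ) - 1) * (β * pn α n) * (β * pn α n) := by
        rw [Finset.sum_const, nsmul_eq_mul]
    _ ≤ ∑ j ∈ (Finset.range n).erase i,
          ∑ k ∈ Finset.range n, edgeP α w n i j * edgeP α w n j k := by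
        apply Finset.sum_le_sum
        intro j hj
        obtain ⟨hji, hj'⟩ := Finset.mem_erase.1 hj
        exact key j hj' hji
    _ ≤ nu α w n i := by
        unfold nu
        apply Finset.sum_le_sum_of_subset_of_nonneg (Finset.erase_subset _ _)
        intro j hj _
        apply Finset.sum_nonneg
        intro k hk
        exact mul_nonneg (edgeP_nonneg hm hi (Finset.mem_range.1 hj))
          (edgeP_nonneg hm (Finset.mem_range.1 hj) (Finset.mem_range.1 hk))

end Stat16Model
section Stat16Int

open MeasureTheory ProbabilityTheory

variable {Ω : ℕ → Type} [∀ n, MeasurableSpace (Ω n)] {α β : ℝ}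
  {μ : ∀ n, Measure (Ω n)} {w : ℕ → ℕ → ℕ → ℝ} {A : ∀ n, ℕ → ℕ → Ω n → ℝ}

/-- integral of a function of a single edge indicator -/
lemma integral_comp_edge (hm : IsHeterER α β μ w A) {n a b : ℕ}
    (ha : a < n) (hb : b < n) (hab : a ≠ b) (h : ℝ → ℝ) :
    ∫ ω, h (A n a b ω) ∂ μ n
      = h 0 * (1 - edgeP α w n a b) + h 1 * edgeP α w n a b := by
  haveI := hm.prob n
  have hv := hm.A_vals n a b
  have hms : MeasurableSet {ω | A n a b ω = 1} :=
    (hm.A_meas n a b) (measurableSet_singleton 1)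
  have hrw : ∀ ω, h (A n a b ω)
      = Set.indicator {ω | A n a b ω = 1} (fun _ => h 1 - h 0) ω + h 0 := by
    intro ω
    rcases hv ω with h0 | h1
    · rw [Set.indicator_of_notMem, h0]
      · ring
      · simp only [Set.mem_setOf_eq, h0]; norm_num
    · rw [Set.indicator_of_mem, h1]
      · ring
      · simpa using h1
  have hint : Integrable (Set.indicator {ω | A n a b ω = 1} (fun _ => h 1 - h 0)) (μ n) := by
    apply Integrable.indicator _ hms
    exact integrable_const _
  calc ∫ ω, h (A n a b ω) ∂ μ n
      = ∫ ω, (Set.indicator {ω | A n a b ω = 1} (fun _ => h 1 - h 0) ω + h 0) ∂ μ n := by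
        exact integral_congr_ae (Filter.Eventually.of_forall hrw)
    _ = (∫ ω, Set.indicator {ω | A n a b ω = 1} (fun _ => h 1 - h 0) ω ∂ μ n)
          + ∫ _ω, h 0 ∂ μ n := integral_add hint (integrable_const _)
    _ = (h 1 - h 0) * edgeP α w n a b + h 0 := by
        rw [integral_indicator_const _ hms, integral_const]
        rw [measureReal_def, hm.A_prob n a (Finset.mem_range.2 ha) b (Finset.mem_range.2 hb) hab]
        rw [ENNReal.toReal_ofReal (edgeP_nonneg hm ha hb)]
        simp [measure_univ, smul_eq_mul, mul_comm]
    _ = h 0 * (1 - edgeP α w n a b) + h 1 * edgeP α w n a b := by ring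

/-- the product formula for independent edges, subtype version -/
lemma integral_prod_edges' (hm : IsHeterER α β μ w A) (n : ℕ)
    (s : Finset {q : ℕ × ℕ // q.1 < q.2}) (f : {q : ℕ × ℕ // q.1 < q.2} → ℝ → ℝ)
    (hf : ∀ e, Measurable (f e)) :
    ∫ ω, ∏ e ∈ s, f e (A n e.1.1 e.1.2 ω) ∂ μ n
      = ∏ e ∈ s, ∫ ω, f e (A n e.1.1 e.1.2 ω) ∂ μ n := by
  haveI := hm.prob n
  classical
  set Y : {q : ℕ × ℕ // q.1 < q.2} → Ω n → ℝ :=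
    fun e ω => f e (A n e.1.1 e.1.2 ω) with hY
  have hYmeas : ∀ e, Measurable (Y e) := fun e => (hf e).comp (hm.A_meas n e.1.1 e.1.2)
  have hYindep : iIndepFun Y (μ n) :=
    (hm.A_indep n).comp (fun e x => f e x) (fun e => hf e)
  induction s using Finset.induction_on with
  | empty => simp
  | @insert a s' ha ih =>
    simp only [Finset.prod_insert ha]
    have hind : IndepFun (∏ e ∈ s', Y e) (Y a) (μ n) :=
      hYindep.indepFun_finset_prod_of_notMem hYmeas ha
    have hprodmeas : Measurable (∏ e ∈ s', Y e) := by
      have := Finset.measurable_prod (f := Y) s' (fun e _ => hYmeas e)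
      convert this using 1
      funext ω; simp [Finset.prod_apply]
    have h1 : ∫ ω, f a (A n a.1.1 a.1.2 ω) * ∏ e ∈ s', f e (A n e.1.1 e.1.2 ω) ∂ μ n
        = (∫ ω, (∏ e ∈ s', Y e) ω ∂ μ n) * ∫ ω, Y a ω ∂ μ n := by
      rw [← IndepFun.integral_fun_mul_eq_mul_integral hind hprodmeas.aestronglyMeasurable (hYmeas a).aestronglyMeasurable]
      congr 1; funext ω
      simp only [Finset.prod_apply, Y]
      rw [mul_comm]
    have h2 : ∫ ω, (∏ e ∈ s', Y e) ω ∂ μ n = ∏ e ∈ s', ∫ ω, Y e ω ∂ μ n := by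
      rw [← ih]
      congr 1; funext ω
      simp only [Finset.prod_apply, Y]
    rw [h1, h2, mul_comm]

/-- the product formula for independent edges -/
lemma integral_prod_edges (hm : IsHeterER α β μ w A) (n : ℕ)
    (s : Finset (ℕ × ℕ)) (hs : ∀ e ∈ s, e.1 < e.2) (f : ℕ × ℕ → ℝ → ℝ)
    (hf : ∀ e, Measurable (f e)) :
    ∫ ω, ∏ e ∈ s, f e (A n e.1 e.2 ω) ∂ μ n
      = ∏ e ∈ s, ∫ ω, f e (A n e.1 e.2 ω) ∂ μ n := by
  classical
  let emb : {x // x ∈ s} ↪ {q : ℕ × ℕ // q.1 < q.2} :=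
    ⟨fun x => ⟨x.1, hs x.1 x.2⟩, by intro x y hxy; exact Subtype.ext (congrArg (fun z : {q : ℕ × ℕ // q.1 < q.2} => z.1) hxy)⟩
  have key := integral_prod_edges' hm n (s.attach.map emb) (fun e => f e.1) (fun e => hf e.1)
  have lhs_eq : ∀ g : (ℕ × ℕ) → ℝ,
      (∏ e ∈ s.attach.map emb, g e.1) = ∏ e ∈ s, g e := by
    intro g
    rw [Finset.prod_map]
    simp only [emb, Function.Embedding.coeFn_mk]
    exact Finset.prod_attach s g
  calc ∫ ω, ∏ e ∈ s, f e (A n e.1 e.2 ω) ∂ μ n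
      = ∫ ω, ∏ e ∈ s.attach.map emb, f e.1 (A n e.1.1 e.1.2 ω) ∂ μ n := by
        congr 1; funext ω
        exact (lhs_eq (fun e => f e (A n e.1 e.2 ω))).symm
    _ = ∏ e ∈ s.attach.map emb, ∫ ω, f e.1 (A n e.1.1 e.1.2 ω) ∂ μ n := key
    _ = ∏ e ∈ s, ∫ ω, f e (A n e.1 e.2 ω) ∂ μ n :=
        lhs_eq (fun e => ∫ ω, f e (A n e.1 e.2 ω) ∂ μ n)

end Stat16Int
section Stat16Pair

open MeasureTheory ProbabilityTheory

/-- per-quadruple coefficient -/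
def cqF (α : ℝ) (w : ℕ → ℕ → ℕ → ℝ) (n : ℕ) (q : (ℕ × ℕ) × (ℕ × ℕ)) : ℝ :=
  edgeP α w n q.1.1 q.1.2 / nu α w n q.1.1 ^ 2

/-- per-quadruple random part -/
def PqF {Ω : ℕ → Type} (α : ℝ) (w : ℕ → ℕ → ℕ → ℝ) (A : ∀ n, ℕ → ℕ → Ω n → ℝ)
    (n : ℕ) (q : (ℕ × ℕ) × (ℕ × ℕ)) (ω : Ω n) : ℝ :=
  A n q.1.1 q.1.2 ω * A n q.1.2 q.2.1 ω * A n q.2.1 q.1.1 ω * Abar α w A n q.1.2 q.2.2 ω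

/-- edge-wise factor function -/
def gq (α : ℝ) (w : ℕ → ℕ → ℕ → ℝ) (n : ℕ) (q : (ℕ × ℕ) × (ℕ × ℕ)) (e : ℕ × ℕ) (x : ℝ) : ℝ :=
  (if e ∈ triq q then x else 1) * (if e = abq q then x - edgeP α w n e.1 e.2 else 1)

lemma gq_measurable {α : ℝ} {w : ℕ → ℕ → ℕ → ℝ} {n : ℕ} {q : (ℕ × ℕ) × (ℕ × ℕ)} {e : ℕ × ℕ} :
    Measurable (fun x => gq α w n q e x) := by
  unfold gq
  apply Measurable.mul
  · split_ifs
    · exact measurable_id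
    · exact measurable_const
  · split_ifs
    · exact measurable_id.sub measurable_const
    · exact measurable_const

lemma gq_one_outside {α : ℝ} {w : ℕ → ℕ → ℕ → ℝ} {n : ℕ} {q : (ℕ × ℕ) × (ℕ × ℕ)} {e : ℕ × ℕ}
    (h : e ∉ esetq q) (x : ℝ) : gq α w n q e x = 1 := by
  have h1 : e ∉ triq q := fun hc => h (Finset.mem_insert_of_mem hc)
  have h2 : e ≠ abq q := fun hc => h (hc ▸ Finset.mem_insert_self _ _)
  simp [gq, h1, h2]

section WithModel

variable {Ω : ℕ → Type} [∀ n, MeasurableSpace (Ω n)] {α β : ℝ}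
  {μ : ∀ n, Measure (Ω n)} {w : ℕ → ℕ → ℕ → ℝ} {A : ∀ n, ℕ → ℕ → Ω n → ℝ}

lemma triq_pairwise {q : (ℕ × ℕ) × (ℕ × ℕ)} (h : goodq q) :
    sedge q.1.1 q.1.2 ≠ sedge q.1.2 q.2.1 ∧ sedge q.1.1 q.1.2 ≠ sedge q.2.1 q.1.1 ∧
      sedge q.1.2 q.2.1 ≠ sedge q.2.1 q.1.1 := by
  obtain ⟨h1, ⟨h2, h3⟩, h4, h5, h6⟩ := h
  refine ⟨?_, ?_, ?_⟩ <;>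
    · intro he; rcases sedge_eq_elim he with ⟨e1, e2⟩ | ⟨e1, e2⟩ <;> omega

lemma Pq_eq (hm : IsHeterER α β μ w A) {n : ℕ} {q : (ℕ × ℕ) × (ℕ × ℕ)}
    (hq : goodq q) (ω : Ω n) :
    PqF α w A n q ω = ∏ e ∈ esetq q, gq α w n q e (A n e.1 e.2 ω) := by
  classical
  obtain ⟨d12, d13, d23⟩ := triq_pairwise hq
  have hab := abq_not_mem_triq hq
  have habne1 : sedge q.1.1 q.1.2 ≠ abq q := by
    intro hc; exact hab (hc ▸ Finset.mem_insert_self _ _)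
  have habne2 : sedge q.1.2 q.2.1 ≠ abq q := by
    intro hc
    exact hab (hc ▸ (by simp [triq] : sedge q.1.2 q.2.1 ∈ triq q))
  have habne3 : sedge q.2.1 q.1.1 ≠ abq q := by
    intro hc
    exact hab (hc ▸ (by simp [triq] : sedge q.2.1 q.1.1 ∈ triq q))
  rw [esetq, Finset.prod_insert hab]
  have htri : triq q = insert (sedge q.1.1 q.1.2)
      (insert (sedge q.1.2 q.2.1) ({sedge q.2.1 q.1.1} : Finset (ℕ × ℕ))) := rfl
  rw [htri, Finset.prod_insert (by simp [d12, d13]), Finset.prod_insert (by simp [d23]),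
    Finset.prod_singleton]
  have g0 : gq α w n q (abq q) (A n (abq q).1 (abq q).2 ω)
      = Abar α w A n q.1.2 q.2.2 ω := by
    rw [gq, if_neg hab, if_pos rfl, one_mul, Abar, abq, A_sedge hm, edgeP_sedge hm]
  have g1 : gq α w n q (sedge q.1.1 q.1.2) (A n (sedge q.1.1 q.1.2).1 (sedge q.1.1 q.1.2).2 ω)
      = A n q.1.1 q.1.2 ω := by
    rw [gq, if_pos (by simp [triq]), if_neg habne1, mul_one, A_sedge hm]
  have g2 : gq α w n q (sedge q.1.2 q.2.1) (A n (sedge q.1.2 q.2.1).1 (sedge q.1.2 q.2.1).2 ω)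
      = A n q.1.2 q.2.1 ω := by
    rw [gq, if_pos (by simp [triq]), if_neg habne2, mul_one, A_sedge hm]
  have g3 : gq α w n q (sedge q.2.1 q.1.1) (A n (sedge q.2.1 q.1.1).1 (sedge q.2.1 q.1.1).2 ω)
      = A n q.2.1 q.1.1 ω := by
    rw [gq, if_pos (by simp [triq]), if_neg habne3, mul_one, A_sedge hm]
  rw [g0, g1, g2, g3, PqF]
  ring

/-- the two-point product as a product over the union of edge sets -/
lemma PP_prod (hm : IsHeterER α β μ w A) {n : ℕ} {q q' : (ℕ × ℕ) × (ℕ × ℕ)}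
    (hq : goodq q) (hq' : goodq q') (ω : Ω n) :
    PqF α w A n q ω * PqF α w A n q' ω
      = ∏ e ∈ esetq q ∪ esetq q',
          gq α w n q e (A n e.1 e.2 ω) * gq α w n q' e (A n e.1 e.2 ω) := by
  classical
  have h1 : ∏ e ∈ esetq q, gq α w n q e (A n e.1 e.2 ω)
      = ∏ e ∈ esetq q ∪ esetq q', gq α w n q e (A n e.1 e.2 ω) :=
    Finset.prod_subset Finset.subset_union_left (fun e _ he => gq_one_outside he _)
  have h2 : ∏ e ∈ esetq q', gq α w n q' e (A n e.1 e.2 ω)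
      = ∏ e ∈ esetq q ∪ esetq q', gq α w n q' e (A n e.1 e.2 ω) :=
    Finset.prod_subset Finset.subset_union_right (fun e _ he => gq_one_outside he _)
  rw [Pq_eq hm hq ω, Pq_eq hm hq' ω, h1, h2, ← Finset.prod_mul_distrib]

end WithModel

end Stat16Pair
section Stat16PairInt

open MeasureTheory ProbabilityTheory

variable {Ω : ℕ → Type} [∀ n, MeasurableSpace (Ω n)] {α β : ℝ}
  {μ : ∀ n, Measure (Ω n)} {w : ℕ → ℕ → ℕ → ℝ} {A : ∀ n, ℕ → ℕ → Ω n → ℝ}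

/-- single-edge integral for a pair of quadruples -/
noncomputable def IeF (α : ℝ) (μ : ∀ n, Measure (Ω n)) (w : ℕ → ℕ → ℕ → ℝ)
    (A : ∀ n, ℕ → ℕ → Ω n → ℝ) (n : ℕ) (q q' : (ℕ × ℕ) × (ℕ × ℕ)) (e : ℕ × ℕ) : ℝ :=
  ∫ ω, gq α w n q e (A n e.1 e.2 ω) * gq α w n q' e (A n e.1 e.2 ω) ∂ μ n

lemma PP_int (hm : IsHeterER α β μ w A) {n : ℕ} {q q' : (ℕ × ℕ) × (ℕ × ℕ)}
    (hq : q ∈ Qn n) (hq' : q' ∈ Qn n) :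
    ∫ ω, PqF α w A n q ω * PqF α w A n q' ω ∂ μ n
      = ∏ e ∈ esetq q ∪ esetq q', IeF α μ w A n q q' e := by
  have hPP : ∀ ω, PqF α w A n q ω * PqF α w A n q' ω
      = ∏ e ∈ esetq q ∪ esetq q',
          (fun x => gq α w n q e x * gq α w n q' e x) (A n e.1 e.2 ω) :=
    PP_prod hm (mem_Qn hq).2 (mem_Qn hq').2
  calc ∫ ω, PqF α w A n q ω * PqF α w A n q' ω ∂ μ n
      = ∫ ω, ∏ e ∈ esetq q ∪ esetq q',
          (fun x => gq α w n q e x * gq α w n q' e x) (A n e.1 e.2 ω) ∂ μ n := by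
        exact integral_congr_ae (Filter.Eventually.of_forall hPP)
    _ = ∏ e ∈ esetq q ∪ esetq q', IeF α μ w A n q q' e := by
        apply integral_prod_edges hm n _ _ _ (fun e => gq_measurable.mul gq_measurable)
        intro e he
        rcases Finset.mem_union.1 he with h | h
        · exact (mem_esetq_facts hq h).1
        · exact (mem_esetq_facts hq' h).1

lemma Ie_val (hm : IsHeterER α β μ w A) {n : ℕ} {q q' : (ℕ × ℕ) × (ℕ × ℕ)} {e : ℕ × ℕ}
    (h1 : e.1 < n) (h2 : e.2 < n) (h3 : e.1 ≠ e.2) :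
    IeF α μ w A n q q' e
      = (gq α w n q e 0 * gq α w n q' e 0) * (1 - edgeP α w n e.1 e.2)
        + (gq α w n q e 1 * gq α w n q' e 1) * edgeP α w n e.1 e.2 :=
  integral_comp_edge hm h1 h2 h3 (fun x => gq α w n q e x * gq α w n q' e x)

lemma gq_zero_abs {n : ℕ} {q : (ℕ × ℕ) × (ℕ × ℕ)} {e : ℕ × ℕ}
    (hμ0 : 0 ≤ edgeP α w n e.1 e.2) (hμ1 : edgeP α w n e.1 e.2 ≤ 1) :
    |gq α w n q e 0| ≤ 1 := by
  unfold gq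
  split_ifs <;> rw [abs_mul] <;> simp [abs_of_nonneg, abs_of_nonpos, hμ0, hμ1] <;>
    rw [abs_of_nonneg (by linarith : (0:ℝ) ≤ edgeP α w n e.1 e.2)] <;> linarith

lemma gq_zero_of_tri {n : ℕ} {q : (ℕ × ℕ) × (ℕ × ℕ)} {e : ℕ × ℕ}
    (h : e ∈ triq q) : gq α w n q e 0 = 0 := by
  unfold gq; rw [if_pos h, zero_mul]

lemma gq_one_bounds {n : ℕ} {q : (ℕ × ℕ) × (ℕ × ℕ)} {e : ℕ × ℕ}
    (hμ0 : 0 ≤ edgeP α w n e.1 e.2) (hμ1 : edgeP α w n e.1 e.2 ≤ 1) :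
    0 ≤ gq α w n q e 1 ∧ gq α w n q e 1 ≤ 1 := by
  unfold gq
  split_ifs <;> constructor <;> simp <;> nlinarith

lemma Ie_abs_le_one (hm : IsHeterER α β μ w A) {n : ℕ} {q q' : (ℕ × ℕ) × (ℕ × ℕ)} {e : ℕ × ℕ}
    (h1 : e.1 < n) (h2 : e.2 < n) (h3 : e.1 ≠ e.2) :
    |IeF α μ w A n q q' e| ≤ 1 := by
  have hμ0 := edgeP_nonneg hm h1 h2
  have hμ1 := edgeP_le_one hm h1 h2
  rw [Ie_val hm h1 h2 h3]
  have a1 := gq_zero_abs (q := q) hμ0 hμ1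
  have a2 := gq_zero_abs (q := q') hμ0 hμ1
  have b1 := gq_one_bounds (q := q) hμ0 hμ1
  have b2 := gq_one_bounds (q := q') hμ0 hμ1
  set x0 := gq α w n q e 0 * gq α w n q' e 0 with hx0
  set x1 := gq α w n q e 1 * gq α w n q' e 1 with hx1
  have habs : |x0| ≤ 1 := by
    rw [hx0, abs_mul]; nlinarith [abs_nonneg (gq α w n q e 0), abs_nonneg (gq α w n q' e 0)]
  have habs2 : |x1| ≤ 1 := by
    rw [hx1, abs_mul, abs_of_nonneg b1.1, abs_of_nonneg b2.1]; nlinarith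
  calc |x0 * (1 - edgeP α w n e.1 e.2) + x1 * edgeP α w n e.1 e.2|
      ≤ |x0| * (1 - edgeP α w n e.1 e.2) + |x1| * edgeP α w n e.1 e.2 := by
        refine le_trans (abs_add_le _ _) ?_
        rw [abs_mul x0, abs_mul x1,
          abs_of_nonneg (by linarith : (0:ℝ) ≤ 1 - edgeP α w n e.1 e.2),
          abs_of_nonneg hμ0]
    _ ≤ 1 * (1 - edgeP α w n e.1 e.2) + 1 * edgeP α w n e.1 e.2 := by
        apply add_le_add <;> apply mul_le_mul_of_nonneg_right <;> first | assumption | linarith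
    _ = 1 := by ring

lemma Ie_abs_le_p (hm : IsHeterER α β μ w A) {n : ℕ} {q q' : (ℕ × ℕ) × (ℕ × ℕ)} {e : ℕ × ℕ}
    (h1 : e.1 < n) (h2 : e.2 < n) (h3 : e.1 ≠ e.2)
    (hr : e ∈ triq q ∨ e ∈ triq q'
      ∨ (e = abq q ∧ e = abq q' ∧ e ∉ triq q ∧ e ∉ triq q')) :
    |IeF α μ w A n q q' e| ≤ pn α n := by
  have hμ0 := edgeP_nonneg hm h1 h2
  have hμ1 := edgeP_le_one hm h1 h2
  have hμp := edgeP_le_pn hm h1 h2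
  rw [Ie_val hm h1 h2 h3]
  rcases hr with h | h | ⟨ha, ha', ht, ht'⟩
  · rw [gq_zero_of_tri h, zero_mul, zero_mul, zero_add, abs_mul, abs_of_nonneg hμ0]
    have b1 := gq_one_bounds (q := q) (e := e) (n := n) (α := α) (w := w) hμ0 hμ1
    have b2 := gq_one_bounds (q := q') (e := e) (n := n) (α := α) (w := w) hμ0 hμ1
    calc |gq α w n q e 1 * gq α w n q' e 1| * edgeP α w n e.1 e.2
        ≤ 1 * edgeP α w n e.1 e.2 := by
          apply mul_le_mul_of_nonneg_right _ hμ0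
          rw [abs_mul, abs_of_nonneg b1.1, abs_of_nonneg b2.1]; nlinarith
      _ ≤ pn α n := by rw [one_mul]; exact hμp
  · rw [gq_zero_of_tri h, mul_zero, zero_mul, zero_add, abs_mul, abs_of_nonneg hμ0]
    have b1 := gq_one_bounds (q := q) (e := e) (n := n) (α := α) (w := w) hμ0 hμ1
    have b2 := gq_one_bounds (q := q') (e := e) (n := n) (α := α) (w := w) hμ0 hμ1
    calc |gq α w n q e 1 * gq α w n q' e 1| * edgeP α w n e.1 e.2
        ≤ 1 * edgeP α w n e.1 e.2 := by
          apply mul_le_mul_of_nonneg_right _ hμ0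
          rw [abs_mul, abs_of_nonneg b1.1, abs_of_nonneg b2.1]; nlinarith
      _ ≤ pn α n := by rw [one_mul]; exact hμp
  · have e0 : gq α w n q e 0 = -(edgeP α w n e.1 e.2) := by
      unfold gq; rw [if_neg ht, if_pos ha, one_mul, zero_sub]
    have e0' : gq α w n q' e 0 = -(edgeP α w n e.1 e.2) := by
      unfold gq; rw [if_neg ht', if_pos ha', one_mul, zero_sub]
    have e1 : gq α w n q e 1 = 1 - edgeP α w n e.1 e.2 := by
      unfold gq; rw [if_neg ht, if_pos ha, one_mul]
    have e1' : gq α w n q' e 1 = 1 - edgeP α w n e.1 e.2 := by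
      unfold gq; rw [if_neg ht', if_pos ha', one_mul]
    rw [e0, e0', e1, e1']
    have key : (-(edgeP α w n e.1 e.2) * -(edgeP α w n e.1 e.2)) * (1 - edgeP α w n e.1 e.2)
        + ((1 - edgeP α w n e.1 e.2) * (1 - edgeP α w n e.1 e.2)) * edgeP α w n e.1 e.2
        = edgeP α w n e.1 e.2 * (1 - edgeP α w n e.1 e.2) := by ring
    rw [key, abs_of_nonneg (by nlinarith)]
    nlinarith

lemma Ie_zero (hm : IsHeterER α β μ w A) {n : ℕ} {q q' : (ℕ × ℕ) × (ℕ × ℕ)} {e : ℕ × ℕ}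
    (h1 : e.1 < n) (h2 : e.2 < n) (h3 : e.1 ≠ e.2)
    (hr : (e = abq q ∧ e ∉ triq q ∧ e ∉ esetq q')
      ∨ (e = abq q' ∧ e ∉ triq q' ∧ e ∉ esetq q)) :
    IeF α μ w A n q q' e = 0 := by
  rw [Ie_val hm h1 h2 h3]
  rcases hr with ⟨ha, ht, ho⟩ | ⟨ha, ht, ho⟩
  · rw [gq_one_outside ho, gq_one_outside ho]
    have e0 : gq α w n q e 0 = -(edgeP α w n e.1 e.2) := by
      unfold gq; rw [if_neg ht, if_pos ha, one_mul, zero_sub]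
    have e1 : gq α w n q e 1 = 1 - edgeP α w n e.1 e.2 := by
      unfold gq; rw [if_neg ht, if_pos ha, one_mul]
    rw [e0, e1]; ring
  · rw [gq_one_outside ho, gq_one_outside ho]
    have e0 : gq α w n q' e 0 = -(edgeP α w n e.1 e.2) := by
      unfold gq; rw [if_neg ht, if_pos ha, one_mul, zero_sub]
    have e1 : gq α w n q' e 1 = 1 - edgeP α w n e.1 e.2 := by
      unfold gq; rw [if_neg ht, if_pos ha, one_mul]
    rw [e0, e1]; ring

end Stat16PairInt
section Stat16PairBound

open MeasureTheory ProbabilityTheory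

variable {Ω : ℕ → Type} [∀ n, MeasurableSpace (Ω n)] {α β : ℝ}
  {μ : ∀ n, Measure (Ω n)} {w : ℕ → ℕ → ℕ → ℝ} {A : ∀ n, ℕ → ℕ → Ω n → ℝ}

lemma mem_union_facts {n : ℕ} {q q' : (ℕ × ℕ) × (ℕ × ℕ)} (hq : q ∈ Qn n) (hq' : q' ∈ Qn n)
    {e : ℕ × ℕ} (he : e ∈ esetq q ∪ esetq q') : e.1 < e.2 ∧ e.1 < n ∧ e.2 < n := by
  rcases Finset.mem_union.1 he with h | h
  · exact mem_esetq_facts hq h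
  · exact mem_esetq_facts hq' h

lemma pair_vanish (hm : IsHeterER α β μ w A) {n : ℕ} {q q' : (ℕ × ℕ) × (ℕ × ℕ)}
    (hq : q ∈ Qn n) (hq' : q' ∈ Qn n)
    (h : abq q ∉ esetq q' ∨ abq q' ∉ esetq q) :
    ∫ ω, PqF α w A n q ω * PqF α w A n q' ω ∂ μ n = 0 := by
  rw [PP_int hm hq hq']
  rcases h with h | h
  · have hmem : abq q ∈ esetq q ∪ esetq q' :=
      Finset.mem_union_left _ (Finset.mem_insert_self _ _)
    obtain ⟨f1, f2, f3⟩ := mem_union_facts hq hq' hmem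
    exact Finset.prod_eq_zero hmem
      (Ie_zero hm f2 f3 (Nat.ne_of_lt f1)
        (Or.inl ⟨rfl, abq_not_mem_triq (mem_Qn hq).2, h⟩))
  · have hmem : abq q' ∈ esetq q ∪ esetq q' :=
      Finset.mem_union_right _ (Finset.mem_insert_self _ _)
    obtain ⟨f1, f2, f3⟩ := mem_union_facts hq hq' hmem
    exact Finset.prod_eq_zero hmem
      (Ie_zero hm f2 f3 (Nat.ne_of_lt f1)
        (Or.inr ⟨rfl, abq_not_mem_triq (mem_Qn hq').2, h⟩))

lemma pair_boundB (hm : IsHeterER α β μ w A) {n : ℕ} {q q' : (ℕ × ℕ) × (ℕ × ℕ)}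
    (hq : q ∈ Qn n) (hq' : q' ∈ Qn n) :
    |∫ ω, PqF α w A n q ω * PqF α w A n q' ω ∂ μ n| ≤ pn α n ^ 3 := by
  classical
  rw [PP_int hm hq hq', Finset.abs_prod]
  have hsub : triq q ⊆ esetq q ∪ esetq q' :=
    le_trans (Finset.subset_insert _ _) Finset.subset_union_left
  calc ∏ e ∈ esetq q ∪ esetq q', |IeF α μ w A n q q' e|
      ≤ ∏ e ∈ esetq q ∪ esetq q', (if e ∈ triq q then pn α n else 1) := by
        apply Finset.prod_le_prod (fun e _ => abs_nonneg _)
        intro e he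
        obtain ⟨f1, f2, f3⟩ := mem_union_facts hq hq' he
        by_cases h : e ∈ triq q
        · rw [if_pos h]; exact Ie_abs_le_p hm f2 f3 (Nat.ne_of_lt f1) (Or.inl h)
        · rw [if_neg h]; exact Ie_abs_le_one hm f2 f3 (Nat.ne_of_lt f1)
    _ = pn α n ^ 3 := by
        rw [Finset.prod_ite_mem,
          Finset.inter_eq_right.2 hsub, Finset.prod_const, triq_card (mem_Qn hq).2]

lemma pair_boundA (hm : IsHeterER α β μ w A) {n : ℕ} {q q' : (ℕ × ℕ) × (ℕ × ℕ)}
    (hq : q ∈ Qn n) (hq' : q' ∈ Qn n) (hab : abq q' = abq q) :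
    |∫ ω, PqF α w A n q ω * PqF α w A n q' ω ∂ μ n| ≤ pn α n ^ 4 := by
  classical
  rw [PP_int hm hq hq', Finset.abs_prod]
  have hsub : esetq q ⊆ esetq q ∪ esetq q' := Finset.subset_union_left
  calc ∏ e ∈ esetq q ∪ esetq q', |IeF α μ w A n q q' e|
      ≤ ∏ e ∈ esetq q ∪ esetq q', (if e ∈ esetq q then pn α n else 1) := by
        apply Finset.prod_le_prod (fun e _ => abs_nonneg _)
        intro e he
        obtain ⟨f1, f2, f3⟩ := mem_union_facts hq hq' he
        by_cases h : e ∈ esetq q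
        · rw [if_pos h]
          rcases Finset.mem_insert.1 h with h' | h'
          · refine Ie_abs_le_p hm f2 f3 (Nat.ne_of_lt f1) (Or.inr (Or.inr ⟨h', ?_, ?_, ?_⟩))
            · rw [← hab] at h'; exact h'
            · rw [h']; exact abq_not_mem_triq (mem_Qn hq).2
            · rw [h', ← hab]; exact abq_not_mem_triq (mem_Qn hq').2
          · exact Ie_abs_le_p hm f2 f3 (Nat.ne_of_lt f1) (Or.inl h')
        · rw [if_neg h]; exact Ie_abs_le_one hm f2 f3 (Nat.ne_of_lt f1)
    _ = pn α n ^ 4 := by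
        rw [Finset.prod_ite_mem,
          Finset.inter_eq_right.2 hsub, Finset.prod_const, esetq_card (mem_Qn hq).2]

/-- combined per-pair bound -/
lemma pair_bound (hm : IsHeterER α β μ w A) {n : ℕ} {q q' : (ℕ × ℕ) × (ℕ × ℕ)}
    (hq : q ∈ Qn n) (hq' : q' ∈ Qn n) :
    |∫ ω, PqF α w A n q ω * PqF α w A n q' ω ∂ μ n|
      ≤ (if abq q' = abq q then pn α n ^ 4 else 0)
        + (if abq q' ∈ triq q ∧ abq q ∈ triq q' then pn α n ^ 3 else 0) := by
  have hn1 : 1 ≤ n := by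
    have := (mem_Qn hq).1.1; omega
  have hp0 : 0 ≤ pn α n := le_of_lt (pn_pos hn1)
  by_cases hA : abq q' = abq q
  · rw [if_pos hA]
    have := pair_boundA hm hq hq' hA
    have h2 : (0:ℝ) ≤ if abq q' ∈ triq q ∧ abq q ∈ triq q' then pn α n ^ 3 else 0 := by
      split_ifs; exacts [pow_nonneg hp0 _, le_refl 0]
    linarith
  · rw [if_neg hA]
    by_cases hB : abq q ∈ esetq q' ∧ abq q' ∈ esetq q
    · have hB1 : abq q' ∈ triq q := by
        rcases Finset.mem_insert.1 hB.2 with h | h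
        · exact absurd h hA
        · exact h
      have hB2 : abq q ∈ triq q' := by
        rcases Finset.mem_insert.1 hB.1 with h | h
        · exact absurd h.symm hA
        · exact h
      rw [if_pos ⟨hB1, hB2⟩, zero_add]
      exact pair_boundB hm hq hq'
    · rw [not_and_or] at hB
      rw [pair_vanish hm hq hq' hB, abs_zero, zero_add]
      split_ifs
      exacts [pow_nonneg hp0 _, le_refl 0]

end Stat16PairBound
section Stat16Count

open MeasureTheory

lemma countA {n : ℕ} {q : (ℕ × ℕ) × (ℕ × ℕ)} :
    (((Qn n).filter (fun q' => abq q' = abq q)).card : ℝ) ≤ 2 * (n : ℝ) ^ 2 := by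
  classical
  have hinj : ∀ q' ∈ (Qn n).filter (fun q' => abq q' = abq q),
      (q'.1.1, (q'.2.1, q'.1.2)) ∈
        Finset.range n ×ˢ (Finset.range n ×ˢ ({q.1.2, q.2.2} : Finset ℕ)) := by
    intro q' hq'
    obtain ⟨hmem, habq⟩ := Finset.mem_filter.1 hq'
    obtain ⟨⟨r1, r2, r3, r4⟩, hgood⟩ := mem_Qn hmem
    simp only [Finset.mem_product, Finset.mem_range, Finset.mem_insert, Finset.mem_singleton]
    refine ⟨r1, r3, ?_⟩
    rcases sedge_eq_elim habq with ⟨h1, _⟩ | ⟨h1, _⟩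
    · exact Or.inl h1
    · exact Or.inr h1
  have hcard := Finset.card_le_card_of_injOn _ hinj ?inj
  case inj =>
    intro q1 h1 q2 h2 heq
    obtain ⟨hm1, hab1⟩ := Finset.mem_filter.1 h1
    obtain ⟨hm2, hab2⟩ := Finset.mem_filter.1 h2
    obtain ⟨_, g1⟩ := mem_Qn hm1
    simp only [Prod.mk.injEq] at heq
    obtain ⟨e1, e2, e3⟩ := heq
    have ht : q1.2.2 = q2.2.2 := by
      have hc : sedge q1.1.2 q1.2.2 = sedge q1.1.2 q2.2.2 := by
        have h12 : abq q1 = abq q2 := hab1.trans hab2.symm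
        unfold abq at h12
        rw [← e3] at h12
        exact h12
      exact sedge_right_inj hc g1.2.2.2.1
    have p1 : q1.1 = q2.1 := Prod.ext e1 e3
    have p2 : q1.2 = q2.2 := Prod.ext e2 ht
    exact Prod.ext p1 p2
  calc (((Qn n).filter (fun q' => abq q' = abq q)).card : ℝ)
      ≤ ((Finset.range n ×ˢ (Finset.range n ×ˢ ({q.1.2, q.2.2} : Finset ℕ))).card : ℝ) := by
        exact_mod_cast hcard
    _ ≤ 2 * (n : ℝ) ^ 2 := by
        rw [Finset.card_product, Finset.card_product, Finset.card_range]
        have h2 : (({q.1.2, q.2.2} : Finset ℕ)).card ≤ 2 :=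
          le_trans (Finset.card_insert_le _ _) (by simp)
        have : (n * (n * ({q.1.2, q.2.2} : Finset ℕ).card) : ℕ) ≤ n * (n * 2) := by
          exact Nat.mul_le_mul_left _ (Nat.mul_le_mul_left _ h2)
        calc ((n * (n * ({q.1.2, q.2.2} : Finset ℕ).card) : ℕ) : ℝ)
            ≤ ((n * (n * 2) : ℕ) : ℝ) := by exact_mod_cast this
          _ = 2 * (n : ℝ) ^ 2 := by push_cast; ring

/-- the six possible oriented edges of the triangle of `q` -/
def F1 (q : (ℕ × ℕ) × (ℕ × ℕ)) : Finset (ℕ × ℕ) :=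
  {(q.1.1, q.1.2), (q.1.2, q.1.1), (q.1.2, q.2.1), (q.2.1, q.1.2), (q.2.1, q.1.1),
    (q.1.1, q.2.1)}

lemma F1_card {q : (ℕ × ℕ) × (ℕ × ℕ)} : (F1 q).card ≤ 6 := by
  unfold F1
  refine le_trans (Finset.card_insert_le _ _) ?_
  refine le_trans (Nat.succ_le_succ (Finset.card_insert_le _ _)) ?_
  refine le_trans (Nat.succ_le_succ (Nat.succ_le_succ (Finset.card_insert_le _ _))) ?_
  refine le_trans (Nat.succ_le_succ (Nat.succ_le_succ (Nat.succ_le_succ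
    (Finset.card_insert_le _ _)))) ?_
  refine le_trans (Nat.succ_le_succ (Nat.succ_le_succ (Nat.succ_le_succ (Nat.succ_le_succ
    (Finset.card_insert_le _ _))))) ?_
  simp

lemma mem_F1_of_tri {q q' : (ℕ × ℕ) × (ℕ × ℕ)} (h : abq q' ∈ triq q) :
    (q'.1.2, q'.2.2) ∈ F1 q := by
  simp only [triq, Finset.mem_insert, Finset.mem_singleton] at h
  simp only [F1, Finset.mem_insert, Finset.mem_singleton, Prod.mk.injEq]
  rcases h with h | h | h <;> rcases sedge_eq_elim h with ⟨h1, h2⟩ | ⟨h1, h2⟩ <;> tauto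

lemma ik_mem_of_tri {q q' : (ℕ × ℕ) × (ℕ × ℕ)} (h : abq q ∈ triq q') :
    q'.1.1 ∈ ({q.1.2, q.2.2} : Finset ℕ) ∨ q'.2.1 ∈ ({q.1.2, q.2.2} : Finset ℕ) := by
  simp only [triq, Finset.mem_insert, Finset.mem_singleton] at h
  simp only [Finset.mem_insert, Finset.mem_singleton]
  rcases h with h | h | h <;> rcases sedge_eq_elim h with ⟨h1, h2⟩ | ⟨h1, h2⟩ <;> tauto

lemma countB {n : ℕ} {q : (ℕ × ℕ) × (ℕ × ℕ)} :
    (((Qn n).filter (fun q' => abq q' ∈ triq q ∧ abq q ∈ triq q')).card : ℝ)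
      ≤ 24 * (n : ℝ) := by
  classical
  set S1 := (Qn n).filter
    (fun q' => (q'.1.2, q'.2.2) ∈ F1 q ∧ q'.1.1 ∈ ({q.1.2, q.2.2} : Finset ℕ)) with hS1
  set S2 := (Qn n).filter
    (fun q' => (q'.1.2, q'.2.2) ∈ F1 q ∧ q'.2.1 ∈ ({q.1.2, q.2.2} : Finset ℕ)) with hS2
  have hcover : (Qn n).filter (fun q' => abq q' ∈ triq q ∧ abq q ∈ triq q') ⊆ S1 ∪ S2 := by
    intro q' hq'
    obtain ⟨hmem, h1, h2⟩ := Finset.mem_filter.1 hq'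
    have hF1 := mem_F1_of_tri h1
    rcases ik_mem_of_tri h2 with h | h
    · exact Finset.mem_union_left _ (Finset.mem_filter.2 ⟨hmem, hF1, h⟩)
    · exact Finset.mem_union_right _ (Finset.mem_filter.2 ⟨hmem, hF1, h⟩)
  have hc1 : S1.card ≤ 2 * (6 * n) := by
    have hinj : ∀ q' ∈ S1, (q'.1.1, ((q'.1.2, q'.2.2), q'.2.1)) ∈
        ({q.1.2, q.2.2} : Finset ℕ) ×ˢ (F1 q ×ˢ Finset.range n) := by
      intro q' hq'
      obtain ⟨hmem, hF, hi⟩ := Finset.mem_filter.1 hq'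
      obtain ⟨⟨r1, r2, r3, r4⟩, _⟩ := mem_Qn hmem
      simp only [Finset.mem_product, Finset.mem_range]
      exact ⟨hi, hF, r3⟩
    have := Finset.card_le_card_of_injOn _ hinj ?inj1
    case inj1 =>
      intro q1 _ q2 _ heq
      simp only [Prod.mk.injEq] at heq
      obtain ⟨e1, ⟨e2, e3⟩, e4⟩ := heq
      exact Prod.ext (Prod.ext e1 e2) (Prod.ext e4 e3)
    refine le_trans this ?_
    rw [Finset.card_product, Finset.card_product, Finset.card_range]
    have h2 : (({q.1.2, q.2.2} : Finset ℕ)).card ≤ 2 :=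
      le_trans (Finset.card_insert_le _ _) (by simp)
    exact Nat.mul_le_mul h2 (Nat.mul_le_mul_right _ F1_card)
  have hc2 : S2.card ≤ 2 * (6 * n) := by
    have hinj : ∀ q' ∈ S2, (q'.2.1, ((q'.1.2, q'.2.2), q'.1.1)) ∈
        ({q.1.2, q.2.2} : Finset ℕ) ×ˢ (F1 q ×ˢ Finset.range n) := by
      intro q' hq'
      obtain ⟨hmem, hF, hk⟩ := Finset.mem_filter.1 hq'
      obtain ⟨⟨r1, r2, r3, r4⟩, _⟩ := mem_Qn hmem
      simp only [Finset.mem_product, Finset.mem_range]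
      exact ⟨hk, hF, r1⟩
    have := Finset.card_le_card_of_injOn _ hinj ?inj2
    case inj2 =>
      intro q1 _ q2 _ heq
      simp only [Prod.mk.injEq] at heq
      obtain ⟨e1, ⟨e2, e3⟩, e4⟩ := heq
      exact Prod.ext (Prod.ext e4 e2) (Prod.ext e1 e3)
    refine le_trans this ?_
    rw [Finset.card_product, Finset.card_product, Finset.card_range]
    have h2 : (({q.1.2, q.2.2} : Finset ℕ)).card ≤ 2 :=
      le_trans (Finset.card_insert_le _ _) (by simp)
    exact Nat.mul_le_mul h2 (Nat.mul_le_mul_right _ F1_card)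
  have : ((Qn n).filter (fun q' => abq q' ∈ triq q ∧ abq q ∈ triq q')).card
      ≤ 2 * (6 * n) + 2 * (6 * n) := by
    refine le_trans (Finset.card_le_card hcover) ?_
    refine le_trans (Finset.card_union_le _ _) ?_
    omega
  calc (((Qn n).filter (fun q' => abq q' ∈ triq q ∧ abq q ∈ triq q')).card : ℝ)
      ≤ ((2 * (6 * n) + 2 * (6 * n) : ℕ) : ℝ) := by exact_mod_cast this
    _ = 24 * (n : ℝ) := by push_cast; ring

end Stat16Count
section Stat16Sum

open MeasureTheory ProbabilityTheory

variable {Ω : ℕ → Type} [∀ n, MeasurableSpace (Ω n)] {α β : ℝ}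
  {μ : ∀ n, Measure (Ω n)} {w : ℕ → ℕ → ℕ → ℝ} {A : ∀ n, ℕ → ℕ → Ω n → ℝ}

lemma sum_pair (hm : IsHeterER α β μ w A) {n : ℕ} {q : (ℕ × ℕ) × (ℕ × ℕ)}
    (hq : q ∈ Qn n) :
    ∑ q' ∈ Qn n, |∫ ω, PqF α w A n q ω * PqF α w A n q' ω ∂ μ n|
      ≤ 2 * (n : ℝ) ^ 2 * pn α n ^ 4 + 24 * (n : ℝ) * pn α n ^ 3 := by
  classical
  have hn1 : 1 ≤ n := by have := (mem_Qn hq).1.1; omega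
  have hp0 : 0 ≤ pn α n := le_of_lt (pn_pos hn1)
  calc ∑ q' ∈ Qn n, |∫ ω, PqF α w A n q ω * PqF α w A n q' ω ∂ μ n|
      ≤ ∑ q' ∈ Qn n, ((if abq q' = abq q then pn α n ^ 4 else 0)
          + (if abq q' ∈ triq q ∧ abq q ∈ triq q' then pn α n ^ 3 else 0)) :=
        Finset.sum_le_sum (fun q' hq' => pair_bound hm hq hq')
    _ = (((Qn n).filter (fun q' => abq q' = abq q)).card : ℝ) * pn α n ^ 4
        + (((Qn n).filter (fun q' => abq q' ∈ triq q ∧ abq q ∈ triq q')).card : ℝ)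
          * pn α n ^ 3 := by
        rw [Finset.sum_add_distrib, ← Finset.sum_filter, ← Finset.sum_filter,
          Finset.sum_const, Finset.sum_const, nsmul_eq_mul, nsmul_eq_mul]
    _ ≤ 2 * (n : ℝ) ^ 2 * pn α n ^ 4 + 24 * (n : ℝ) * pn α n ^ 3 := by
        apply add_le_add
        · exact mul_le_mul_of_nonneg_right countA (pow_nonneg hp0 4)
        · exact mul_le_mul_of_nonneg_right countB (pow_nonneg hp0 3)

lemma cq_abs_le (hm : IsHeterER α β μ w A) {n : ℕ} {q : (ℕ × ℕ) × (ℕ × ℕ)}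
    (hq : q ∈ Qn n) (hn : 2 ≤ n) :
    |cqF α w n q| ≤ pn α n / (β ^ 2 * ((n : ℝ) - 1) ^ 2 * pn α n ^ 2) ^ 2 := by
  obtain ⟨⟨r1, r2, r3, r4⟩, hgood⟩ := mem_Qn hq
  have hb := hm.beta_mem.1
  have hp := pn_pos (α := α) (n := n) (by omega)
  have hn1 : (1:ℝ) ≤ (n:ℝ) - 1 := by
    have : (2:ℝ) ≤ (n:ℝ) := by exact_mod_cast hn
    linarith
  have hνlb : 0 < β ^ 2 * ((n : ℝ) - 1) ^ 2 * pn α n ^ 2 := by positivity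
  have hν := nu_lb hm r1 hn
  have hcq0 : 0 ≤ cqF α w n q :=
    div_nonneg (edgeP_nonneg hm r1 r2) (by positivity)
  rw [abs_of_nonneg hcq0, cqF]
  apply div_le_div₀ hp.le (edgeP_le_pn hm r1 r2) (by positivity)
  exact pow_le_pow_left₀ hνlb.le hν 2

lemma cardQn {n : ℕ} : ((Qn n).card : ℝ) ≤ (n : ℝ) ^ 4 := by
  have h1 : (Qn n).card
      ≤ ((Finset.range n ×ˢ Finset.range n) ×ˢ (Finset.range n ×ˢ Finset.range n)).card :=
    Finset.card_filter_le _ _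
  simp only [Finset.card_product, Finset.card_range] at h1
  calc ((Qn n).card : ℝ) ≤ ((n * n * (n * n) : ℕ) : ℝ) := by exact_mod_cast h1
    _ = (n : ℝ) ^ 4 := by push_cast; ring

lemma Pq_measurable (hm : IsHeterER α β μ w A) {n : ℕ} (q : (ℕ × ℕ) × (ℕ × ℕ)) :
    Measurable (fun ω => PqF α w A n q ω) := by
  unfold PqF Abar
  exact (((hm.A_meas n _ _).mul (hm.A_meas n _ _)).mul (hm.A_meas n _ _)).mul
    ((hm.A_meas n _ _).sub measurable_const)

lemma A_abs_le_one (hm : IsHeterER α β μ w A) {n a b : ℕ} (ω : Ω n) :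
    |A n a b ω| ≤ 1 := by
  rcases hm.A_vals n a b ω with h | h <;> rw [h] <;> norm_num

lemma Abar_abs_le_one (hm : IsHeterER α β μ w A) {n a b : ℕ} (ha : a < n) (hb : b < n)
    (ω : Ω n) : |Abar α w A n a b ω| ≤ 1 := by
  have h0 := edgeP_nonneg hm ha hb
  have h1 := edgeP_le_one hm ha hb
  unfold Abar
  rcases hm.A_vals n a b ω with h | h <;> rw [h] <;> rw [abs_le] <;> constructor <;> linarith

lemma Pq_abs_le_one (hm : IsHeterER α β μ w A) {n : ℕ} {q : (ℕ × ℕ) × (ℕ × ℕ)}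
    (hq : q ∈ Qn n) (ω : Ω n) : |PqF α w A n q ω| ≤ 1 := by
  obtain ⟨⟨r1, r2, r3, r4⟩, hgood⟩ := mem_Qn hq
  unfold PqF
  rw [abs_mul, abs_mul, abs_mul]
  have b1 := A_abs_le_one hm (n := n) (a := q.1.1) (b := q.1.2) ω
  have b2 := A_abs_le_one hm (n := n) (a := q.1.2) (b := q.2.1) ω
  have b3 := A_abs_le_one hm (n := n) (a := q.2.1) (b := q.1.1) ω
  have b4 := Abar_abs_le_one hm r2 r4 ω
  have n1 := abs_nonneg (A n q.1.1 q.1.2 ω)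
  have n2 := abs_nonneg (A n q.1.2 q.2.1 ω)
  have n3 := abs_nonneg (A n q.2.1 q.1.1 ω)
  have n4 := abs_nonneg (Abar α w A n q.1.2 q.2.2 ω)
  have m1 : |A n q.1.1 q.1.2 ω| * |A n q.1.2 q.2.1 ω| ≤ 1 := by nlinarith
  have m1' : 0 ≤ |A n q.1.1 q.1.2 ω| * |A n q.1.2 q.2.1 ω| := mul_nonneg n1 n2
  have m2 : |A n q.1.1 q.1.2 ω| * |A n q.1.2 q.2.1 ω| * |A n q.2.1 q.1.1 ω| ≤ 1 := by nlinarith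
  have m2' : 0 ≤ |A n q.1.1 q.1.2 ω| * |A n q.1.2 q.2.1 ω| * |A n q.2.1 q.1.1 ω| :=
    mul_nonneg m1' n3
  nlinarith

lemma PP_integrable (hm : IsHeterER α β μ w A) {n : ℕ} {q q' : (ℕ × ℕ) × (ℕ × ℕ)}
    (hq : q ∈ Qn n) (hq' : q' ∈ Qn n) :
    Integrable (fun ω => PqF α w A n q ω * PqF α w A n q' ω) (μ n) := by
  haveI := hm.prob n
  have hmeas : Measurable (fun ω => PqF α w A n q ω * PqF α w A n q' ω) :=
    (Pq_measurable hm q).mul (Pq_measurable hm q')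
  refine (memLp_top_of_bound hmeas.aestronglyMeasurable 1 (Filter.Eventually.of_forall ?_)).integrable le_top
  intro ω
  rw [Real.norm_eq_abs, abs_mul]
  have h1 := Pq_abs_le_one hm hq ω
  have h2 := Pq_abs_le_one hm hq' ω
  have n1 := abs_nonneg (PqF α w A n q ω)
  nlinarith

end Stat16Sum
section Stat16Assemble

open MeasureTheory ProbabilityTheory

variable {Ω : ℕ → Type} [∀ n, MeasurableSpace (Ω n)] {α β : ℝ}
  {μ : ∀ n, Measure (Ω n)} {w : ℕ → ℕ → ℕ → ℝ} {A : ∀ n, ℕ → ℕ → Ω n → ℝ}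

lemma stat16_eq {n : ℕ} (ω : Ω n) :
    stat16 α w A n ω = ((n : ℝ))⁻¹ * ∑ q ∈ Qn n,
      A n q.1.1 q.1.2 ω * A n q.1.2 q.2.1 ω * A n q.2.1 q.1.1 ω * edgeP α w n q.1.1 q.1.2 *
        Abar α w A n q.1.2 q.2.2 ω / nu α w n q.1.1 ^ 2 := by
  classical
  unfold stat16
  congr 1
  have hR : ∑ q ∈ Qn n, (A n q.1.1 q.1.2 ω * A n q.1.2 q.2.1 ω * A n q.2.1 q.1.1 ω *
      edgeP α w n q.1.1 q.1.2 * Abar α w A n q.1.2 q.2.2 ω / nu α w n q.1.1 ^ 2)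
      = ∑ i ∈ Finset.range n, ∑ j ∈ Finset.range n, ∑ k ∈ Finset.range n,
          ∑ t ∈ Finset.range n,
        if goodq ((i, j), (k, t)) then
          A n i j ω * A n j k ω * A n k i ω * edgeP α w n i j * Abar α w A n j t ω
            / nu α w n i ^ 2 else 0 := by
    rw [Qn, Finset.sum_filter, Finset.sum_product]
    simp only [Finset.sum_product]
  rw [hR]
  have he : ∀ (s : Finset ℕ) (b : ℕ), s.erase b = s.filter (fun a => a ≠ b) :=
    fun s b => (Finset.filter_ne' s b).symm
  simp only [he, Finset.sum_filter]
  refine Finset.sum_congr rfl fun i _ => ?_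
  refine Finset.sum_congr rfl fun j _ => ?_
  by_cases h1 : j = i
  · simp [goodq, h1]
  · rw [if_pos h1]
    refine Finset.sum_congr rfl fun k _ => ?_
    by_cases h2 : k = i
    · simp [goodq, h2]
    · rw [if_pos h2]
      by_cases h3 : k = j
      · simp [goodq, h3]
      · rw [if_pos h3]
        refine Finset.sum_congr rfl fun t _ => ?_
        by_cases h4 : t = i
        · simp [goodq, h4]
        · rw [if_pos h4]
          by_cases h5 : t = j
          · simp [goodq, h5]
          · rw [if_pos h5]
            by_cases h6 : t = k
            · simp [goodq, h6]
            · rw [if_pos h6, if_pos (show goodq ((i, j), (k, t)) from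
                ⟨h1, ⟨h3, h2⟩, h6, h5, h4⟩)]

lemma Tq_integrable (hm : IsHeterER α β μ w A) {n : ℕ} {q q' : (ℕ × ℕ) × (ℕ × ℕ)}
    (hq : q ∈ Qn n) (hq' : q' ∈ Qn n) :
    Integrable (fun ω => (cqF α w n q * PqF α w A n q ω)
      * (cqF α w n q' * PqF α w A n q' ω)) (μ n) := by
  have h := (PP_integrable hm hq hq').const_mul (cqF α w n q * cqF α w n q')
  apply h.congr
  apply Filter.Eventually.of_forall
  intro ω
  ring

lemma stat16_sq_expand (hm : IsHeterER α β μ w A) (n : ℕ) :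
    ∫ ω, stat16 α w A n ω ^ 2 ∂ μ n
      = ((n : ℝ)⁻¹) ^ 2 * ∑ q ∈ Qn n, ∑ q' ∈ Qn n,
          cqF α w n q * cqF α w n q'
            * ∫ ω, PqF α w A n q ω * PqF α w A n q' ω ∂ μ n := by
  have hpt : ∀ ω : Ω n, stat16 α w A n ω ^ 2
      = ((n : ℝ)⁻¹) ^ 2 * ∑ q ∈ Qn n, ∑ q' ∈ Qn n,
          (cqF α w n q * PqF α w A n q ω) * (cqF α w n q' * PqF α w A n q' ω) := by
    intro ω
    rw [stat16_eq ω, mul_pow]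
    congr 1
    rw [sq, Finset.sum_mul_sum]
    refine Finset.sum_congr rfl fun q _ => Finset.sum_congr rfl fun q' _ => ?_
    unfold cqF PqF
    ring
  calc ∫ ω, stat16 α w A n ω ^ 2 ∂ μ n
      = ∫ ω, ((n : ℝ)⁻¹) ^ 2 * ∑ q ∈ Qn n, ∑ q' ∈ Qn n,
          (cqF α w n q * PqF α w A n q ω) * (cqF α w n q' * PqF α w A n q' ω) ∂ μ n :=
        integral_congr_ae (Filter.Eventually.of_forall hpt)
    _ = ((n : ℝ)⁻¹) ^ 2 * ∫ ω, ∑ q ∈ Qn n, ∑ q' ∈ Qn n,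
          (cqF α w n q * PqF α w A n q ω) * (cqF α w n q' * PqF α w A n q' ω) ∂ μ n :=
        integral_const_mul _ _
    _ = ((n : ℝ)⁻¹) ^ 2 * ∑ q ∈ Qn n, ∫ ω, ∑ q' ∈ Qn n,
          (cqF α w n q * PqF α w A n q ω) * (cqF α w n q' * PqF α w A n q' ω) ∂ μ n := by
        congr 1
        apply integral_finset_sum
        intro q hq
        exact integrable_finset_sum _ (fun q' hq' => Tq_integrable hm hq hq')
    _ = ((n : ℝ)⁻¹) ^ 2 * ∑ q ∈ Qn n, ∑ q' ∈ Qn n, ∫ ω,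
          (cqF α w n q * PqF α w A n q ω) * (cqF α w n q' * PqF α w A n q' ω) ∂ μ n := by
        congr 1
        refine Finset.sum_congr rfl fun q hq => ?_
        exact integral_finset_sum _ (fun q' hq' => Tq_integrable hm hq hq')
    _ = ((n : ℝ)⁻¹) ^ 2 * ∑ q ∈ Qn n, ∑ q' ∈ Qn n,
          cqF α w n q * cqF α w n q'
            * ∫ ω, PqF α w A n q ω * PqF α w A n q' ω ∂ μ n := by
        congr 1
        refine Finset.sum_congr rfl fun q hq => Finset.sum_congr rfl fun q' hq' => ?_
        rw [← integral_const_mul]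
        congr 1
        funext ω
        ring

lemma final_numeric {N P b : ℝ} (hN : 2 ≤ N) (hP : 0 < P) (hNP : 1 ≤ N * P) (hb : 0 < b) :
    (N⁻¹) ^ 2 * (N ^ 4 * ((P / (b ^ 2 * (N - 1) ^ 2 * P ^ 2) ^ 2) ^ 2
        * (2 * N ^ 2 * P ^ 4 + 24 * N * P ^ 3)))
      ≤ 6656 / b ^ 8 / (N ^ 2 * (N * P) ^ 2) := by
  have hN1 : (1:ℝ) ≤ N - 1 := by linarith
  have hN0 : (0:ℝ) < N := by linarith
  have hbne : b ≠ 0 := ne_of_gt hb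
  have hPne : P ≠ 0 := ne_of_gt hP
  have hNne : N ≠ 0 := ne_of_gt hN0
  have hN1ne : N - 1 ≠ 0 := by linarith
  have key : (2 * N ^ 4 * P + 24 * N ^ 3) * N ^ 4 ≤ 6656 * (N - 1) ^ 8 * P := by
    have h8 : (N / 2) ^ 8 ≤ (N - 1) ^ 8 :=
      pow_le_pow_left₀ (by linarith) (by linarith) 8
    have hn7 : N ^ 7 ≤ N ^ 8 * P := by
      calc N ^ 7 = N ^ 7 * 1 := (mul_one _).symm
        _ ≤ N ^ 7 * (N * P) := by
            apply mul_le_mul_of_nonneg_left hNP (by positivity)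
        _ = N ^ 8 * P := by ring
    calc (2 * N ^ 4 * P + 24 * N ^ 3) * N ^ 4 = 2 * N ^ 8 * P + 24 * N ^ 7 := by ring
      _ ≤ 2 * N ^ 8 * P + 24 * (N ^ 8 * P) := by linarith
      _ = 6656 * (N / 2) ^ 8 * P := by ring
      _ ≤ 6656 * (N - 1) ^ 8 * P := by
          have h' := mul_le_mul_of_nonneg_right h8 hP.le
          nlinarith
  have hEq : (N⁻¹) ^ 2 * (N ^ 4 * ((P / (b ^ 2 * (N - 1) ^ 2 * P ^ 2) ^ 2) ^ 2
        * (2 * N ^ 2 * P ^ 4 + 24 * N * P ^ 3)))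
      = (2 * N ^ 4 * P + 24 * N ^ 3) / (b ^ 8 * (N - 1) ^ 8 * P ^ 3) := by
    field_simp
  rw [hEq, div_le_div_iff₀ (by positivity) (by positivity)]
  have hRHS : 6656 / b ^ 8 * (b ^ 8 * (N - 1) ^ 8 * P ^ 3)
      = 6656 * ((N - 1) ^ 8 * P ^ 3) := by field_simp
  rw [hRHS]
  calc (2 * N ^ 4 * P + 24 * N ^ 3) * (N ^ 2 * (N * P) ^ 2)
      = ((2 * N ^ 4 * P + 24 * N ^ 3) * N ^ 4) * P ^ 2 := by ring
    _ ≤ (6656 * (N - 1) ^ 8 * P) * P ^ 2 :=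
        mul_le_mul_of_nonneg_right key (by positivity)
    _ = 6656 * ((N - 1) ^ 8 * P ^ 3) := by ring

end Stat16Assemble
/-- Second moment bound `E[stat16²] = O(1/(n²(n p_n)²))`. -/
theorem stat16_second_moment
    {Ω : ℕ → Type} [∀ n, MeasurableSpace (Ω n)] (α β : ℝ)
    (μ : ∀ n, Measure (Ω n)) (w : ℕ → ℕ → ℕ → ℝ) (A : ∀ n, ℕ → ℕ → Ω n → ℝ)
    (hmodel : IsHeterER α β μ w A) :
    ∃ C : ℝ, 0 < C ∧ ∃ N : ℕ, ∀ n ≥ N,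
      (∫ ω, (stat16 α w A n ω) ^ 2 ∂μ n) ≤ C / ((n : ℝ) ^ 2 * ((n : ℝ) * pn α n) ^ 2) := by
  have hb : 0 < β := hmodel.beta_mem.1
  refine ⟨6656 / β ^ 8, by positivity, 2, ?_⟩
  intro n hn
  have hn1 : 1 ≤ n := by omega
  have hN2 : (2:ℝ) ≤ (n:ℝ) := by exact_mod_cast hn
  have hP : 0 < pn α n := pn_pos hn1
  have hP1 : pn α n ≤ 1 := pn_le_one hmodel hn1
  have hnP : 1 ≤ (n:ℝ) * pn α n := npn_ge_one hmodel hn1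
  set P := pn α n with hPdef
  set K := P / (β ^ 2 * ((n:ℝ) - 1) ^ 2 * P ^ 2) ^ 2 with hKdef
  have hK0 : 0 ≤ K := div_nonneg hP.le (by positivity)
  rw [stat16_sq_expand hmodel n]
  have hM0 : 0 ≤ 2 * (n : ℝ) ^ 2 * P ^ 4 + 24 * (n : ℝ) * P ^ 3 := by positivity
  have step1 : ∑ q ∈ Qn n, ∑ q' ∈ Qn n,
      cqF α w n q * cqF α w n q' * ∫ ω, PqF α w A n q ω * PqF α w A n q' ω ∂ μ n
      ≤ (n : ℝ) ^ 4 * (K ^ 2 * (2 * (n : ℝ) ^ 2 * P ^ 4 + 24 * (n : ℝ) * P ^ 3)) := by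
    calc ∑ q ∈ Qn n, ∑ q' ∈ Qn n,
        cqF α w n q * cqF α w n q' * ∫ ω, PqF α w A n q ω * PqF α w A n q' ω ∂ μ n
        ≤ ∑ q ∈ Qn n, (K ^ 2 * (2 * (n : ℝ) ^ 2 * P ^ 4 + 24 * (n : ℝ) * P ^ 3)) := by
          apply Finset.sum_le_sum
          intro q hq
          calc ∑ q' ∈ Qn n,
              cqF α w n q * cqF α w n q' * ∫ ω, PqF α w A n q ω * PqF α w A n q' ω ∂ μ n
              ≤ ∑ q' ∈ Qn n,
                K * K * |∫ ω, PqF α w A n q ω * PqF α w A n q' ω ∂ μ n| := by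
                apply Finset.sum_le_sum
                intro q' hq'
                refine le_trans (le_abs_self _) ?_
                rw [abs_mul, abs_mul]
                have c1 := cq_abs_le hmodel hq hn
                have c2 := cq_abs_le hmodel hq' hn
                apply mul_le_mul_of_nonneg_right _ (abs_nonneg _)
                exact mul_le_mul c1 c2 (abs_nonneg _) hK0
            _ = K * K * ∑ q' ∈ Qn n,
                |∫ ω, PqF α w A n q ω * PqF α w A n q' ω ∂ μ n| := by
                rw [Finset.mul_sum]
            _ ≤ K * K * (2 * (n : ℝ) ^ 2 * P ^ 4 + 24 * (n : ℝ) * P ^ 3) := by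
                apply mul_le_mul_of_nonneg_left (sum_pair hmodel hq) (by positivity)
            _ = K ^ 2 * (2 * (n : ℝ) ^ 2 * P ^ 4 + 24 * (n : ℝ) * P ^ 3) := by ring
      _ = ((Qn n).card : ℝ) * (K ^ 2 * (2 * (n : ℝ) ^ 2 * P ^ 4 + 24 * (n : ℝ) * P ^ 3)) := by
          rw [Finset.sum_const, nsmul_eq_mul]
      _ ≤ (n : ℝ) ^ 4 * (K ^ 2 * (2 * (n : ℝ) ^ 2 * P ^ 4 + 24 * (n : ℝ) * P ^ 3)) := by
          apply mul_le_mul_of_nonneg_right cardQn (by positivity)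
  calc ((n : ℝ)⁻¹) ^ 2 * ∑ q ∈ Qn n, ∑ q' ∈ Qn n,
      cqF α w n q * cqF α w n q' * ∫ ω, PqF α w A n q ω * PqF α w A n q' ω ∂ μ n
      ≤ ((n : ℝ)⁻¹) ^ 2 * ((n : ℝ) ^ 4
          * (K ^ 2 * (2 * (n : ℝ) ^ 2 * P ^ 4 + 24 * (n : ℝ) * P ^ 3))) := by
        apply mul_le_mul_of_nonneg_left step1 (by positivity)
    _ ≤ 6656 / β ^ 8 / ((n : ℝ) ^ 2 * ((n : ℝ) * P) ^ 2) := by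
        rw [hKdef]
        exact final_numeric hN2 hP hnP hb
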